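/- There exists a quadruple of finitely-valued random variables (φ, ψ, s, t) with φ, ψ independent and uniform on two-element sets, which is disjoint (P(ψ|φ,s)=P(ψ|φ) and P(φ|ψ,t)=P(φ|ψ)) but not classically generated. Concretely, the distribution given by p(s,t|φ,ψ) with P(s≠t|φ,ψ) = cos²(π/8) for (φ,ψ) ≠ (1,0) and P(s≠t|φ,ψ) = sin²(π/8) for (φ,ψ) = (1,0), with s uniform marginally, is such a quadruple. -/
import Mathlib


variable {S T Φ Ψ : Type*} [Fintype S] [Fintype T] [Fintype Φ] [Fintype Ψ]

/-- `p` is a joint probability distribution of `(s, t, φ, ψ)`. -/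
def IsDist (p : S → T → Φ → Ψ → ℝ) : Prop :=
  (∀ s t φ ψ, 0 ≤ p s t φ ψ) ∧ ∑ s, ∑ t, ∑ φ, ∑ ψ, p s t φ ψ = 1

/-- Marginal `p(φ)`. -/
def mΦ (p : S → T → Φ → Ψ → ℝ) (φ : Φ) : ℝ := ∑ s, ∑ t, ∑ ψ, p s t φ ψ
/-- Marginal `p(ψ)`. -/
def mΨ (p : S → T → Φ → Ψ → ℝ) (ψ : Ψ) : ℝ := ∑ s, ∑ t, ∑ φ, p s t φ ψ
/-- Marginal `p(t)`. -/
def mT (p : S → T → Φ → Ψ → ℝ) (t : T) : ℝ := ∑ s, ∑ φ, ∑ ψ, p s t φ ψ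
/-- Marginal `p(φ, ψ)`. -/
def mΦΨ (p : S → T → Φ → Ψ → ℝ) (φ : Φ) (ψ : Ψ) : ℝ := ∑ s, ∑ t, p s t φ ψ
/-- Marginal `p(φ, s)`. -/
def mΦS (p : S → T → Φ → Ψ → ℝ) (φ : Φ) (s : S) : ℝ := ∑ t, ∑ ψ, p s t φ ψ
/-- Marginal `p(ψ, t)`. -/
def mΨT (p : S → T → Φ → Ψ → ℝ) (ψ : Ψ) (t : T) : ℝ := ∑ s, ∑ φ, p s t φ ψ
/-- Marginal `p(ψ, φ, s)`. -/
def mΨΦS (p : S → T → Φ → Ψ → ℝ) (ψ : Ψ) (φ : Φ) (s : S) : ℝ := ∑ t, p s t φ ψ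
/-- Marginal `p(φ, ψ, t)`. -/
def mΦΨT (p : S → T → Φ → Ψ → ℝ) (φ : Φ) (ψ : Ψ) (t : T) : ℝ := ∑ s, p s t φ ψ
/-- Marginal `p(t, φ)`. -/
def mTΦ (p : S → T → Φ → Ψ → ℝ) (t : T) (φ : Φ) : ℝ := ∑ s, ∑ ψ, p s t φ ψ
/-- Marginal `p(s, t, φ)`. -/
def mSTΦ (p : S → T → Φ → Ψ → ℝ) (s : S) (t : T) (φ : Φ) : ℝ := ∑ ψ, p s t φ ψ

/-- `φ` and `ψ` are independent under `p`. -/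
def IndepStates (p : S → T → Φ → Ψ → ℝ) : Prop :=
  ∀ φ ψ, mΦΨ p φ ψ = mΦ p φ * mΨ p ψ

/-- The signals are disjoint: `P(ψ | φ, s) = P(ψ | φ)` and `P(φ | ψ, t) = P(φ | ψ)`
whenever the conditioning events have positive probability. -/
def Disjoint' (p : S → T → Φ → Ψ → ℝ) : Prop :=
  (∀ ψ φ s, 0 < mΦS p φ s →
      mΨΦS p ψ φ s / mΦS p φ s = mΦΨ p φ ψ / mΦ p φ) ∧
  (∀ φ ψ t, 0 < mΨT p ψ t →
      mΦΨT p φ ψ t / mΨT p ψ t = mΦΨ p φ ψ / mΨ p ψ)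

/-- The signals are classically generated: there is a finitely-valued shared
random variable `x` (with distribution `μ`), independent of `(φ, ψ)`, and
response kernels `f(s | x, φ)`, `g(t | x, ψ)` such that the joint distribution
is `p(s,t,φ,ψ) = p(φ) p(ψ) ∑_x μ(x) f(s|x,φ) g(t|x,ψ)`; equivalently
`p(s,t | x, φ, ψ) = p(s | x, φ) · p(t | x, ψ)` with `x ⊥ (φ, ψ)`. -/
def ClassicallyGenerated (p : S → T → Φ → Ψ → ℝ) : Prop :=
  ∃ (k : ℕ) (μ : Fin k → ℝ) (f : Fin k → Φ → S → ℝ) (g : Fin k → Ψ → T → ℝ),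
    (∀ x, 0 ≤ μ x) ∧ (∑ x, μ x = 1) ∧
    (∀ x φ s, 0 ≤ f x φ s) ∧ (∀ x φ, ∑ s, f x φ s = 1) ∧
    (∀ x ψ t, 0 ≤ g x ψ t) ∧ (∀ x ψ, ∑ t, g x ψ t = 1) ∧
    (∀ s t φ ψ, p s t φ ψ = mΦ p φ * mΨ p ψ * ∑ x, μ x * f x φ s * g x ψ t)

open Real

/-- The quantum correlations of the CHSH-type game: `s ≠ t` with probability
`cos²(π/8)` on state pairs `(φ,ψ) ≠ (1,0)` and with probability `sin²(π/8)` on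
`(φ,ψ) = (1,0)`, with `φ, ψ` independent uniform and `s` uniform marginally. -/
noncomputable def pQuantum (s t φ ψ : Fin 2) : ℝ :=
  (1 / 8) * (if ((φ = 1 ∧ ψ = 0) ↔ s = t) then Real.cos (π / 8) ^ 2
             else Real.sin (π / 8) ^ 2)


section helpers

private lemma pyth : Real.sin (π/8) ^ 2 + Real.cos (π/8) ^ 2 = 1 :=
  Real.sin_sq_add_cos_sq _

private lemma cos_sq_gt : 3/4 < Real.cos (π/8) ^ 2 := by
  have h : Real.cos (π/8) ^ 2 = 1/2 + Real.cos (2 * (π/8)) / 2 := Real.cos_sq _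
  have h2 : (2 : ℝ) * (π/8) = π/4 := by ring
  rw [h2, Real.cos_pi_div_four] at h
  have hs : (1:ℝ) < Real.sqrt 2 := by
    have := Real.sq_sqrt (by norm_num : (0:ℝ) ≤ 2)
    nlinarith [Real.sqrt_nonneg 2]
  rw [h]; linarith

private lemma hmPsiPhiS : ∀ ψ φ s : Fin 2, mΨΦS pQuantum ψ φ s = 1/8 := by
  have h := pyth
  intro ψ φ s
  fin_cases ψ <;> fin_cases φ <;> fin_cases s <;>
    norm_num [mΨΦS, pQuantum, Fin.sum_univ_two, -Real.cos_pi_div_eight, -Real.sin_pi_div_eight] <;> linarith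

private lemma hmPhiPsiT : ∀ φ ψ t : Fin 2, mΦΨT pQuantum φ ψ t = 1/8 := by
  have h := pyth
  intro φ ψ t
  fin_cases φ <;> fin_cases ψ <;> fin_cases t <;>
    norm_num [mΦΨT, pQuantum, Fin.sum_univ_two, -Real.cos_pi_div_eight, -Real.sin_pi_div_eight] <;> linarith

private lemma hmPhiPsi : ∀ φ ψ : Fin 2, mΦΨ pQuantum φ ψ = 1/4 := by
  have h := pyth
  intro φ ψ
  fin_cases φ <;> fin_cases ψ <;>
    norm_num [mΦΨ, pQuantum, Fin.sum_univ_two, -Real.cos_pi_div_eight, -Real.sin_pi_div_eight] <;> linarith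

private lemma hmPhi : ∀ φ : Fin 2, mΦ pQuantum φ = 1/2 := by
  have h := pyth
  intro φ
  fin_cases φ <;>
    norm_num [mΦ, pQuantum, Fin.sum_univ_two, -Real.cos_pi_div_eight, -Real.sin_pi_div_eight] <;> linarith

private lemma hmPsi : ∀ ψ : Fin 2, mΨ pQuantum ψ = 1/2 := by
  have h := pyth
  intro ψ
  fin_cases ψ <;>
    norm_num [mΨ, pQuantum, Fin.sum_univ_two, -Real.cos_pi_div_eight, -Real.sin_pi_div_eight] <;> linarith

private lemma hmPhiS : ∀ φ s : Fin 2, mΦS pQuantum φ s = 1/4 := by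
  have h := pyth
  intro φ s
  fin_cases φ <;> fin_cases s <;>
    norm_num [mΦS, pQuantum, Fin.sum_univ_two, -Real.cos_pi_div_eight, -Real.sin_pi_div_eight] <;> linarith

private lemma hmPsiT : ∀ ψ t : Fin 2, mΨT pQuantum ψ t = 1/4 := by
  have h := pyth
  intro ψ t
  fin_cases ψ <;> fin_cases t <;>
    norm_num [mΨT, pQuantum, Fin.sum_univ_two, -Real.cos_pi_div_eight, -Real.sin_pi_div_eight] <;> linarith

end helpers

/-- There exist disjoint but not classically generated signals: the concrete
distribution `pQuantum` (with `φ, ψ` independent uniform on two-element sets)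
is a probability distribution, is disjoint, but is not classically generated. -/
theorem exists_disjoint_not_classicallyGenerated :
    IsDist pQuantum ∧
    (∀ φ : Fin 2, mΦ pQuantum φ = 1 / 2) ∧
    (∀ ψ : Fin 2, mΨ pQuantum ψ = 1 / 2) ∧
    IndepStates pQuantum ∧
    Disjoint' pQuantum ∧
    ¬ ClassicallyGenerated pQuantum := by
  have hpy := pyth
  have hgt := cos_sq_gt
  refine ⟨⟨?_, ?_⟩, hmPhi, hmPsi, ?_, ⟨?_, ?_⟩, ?_⟩
  · intro s t φ ψ
    unfold pQuantum
    split <;> positivity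
  · norm_num [pQuantum, Fin.sum_univ_two, -Real.cos_pi_div_eight, -Real.sin_pi_div_eight]
    linarith
  · intro φ ψ
    rw [hmPhiPsi, hmPhi, hmPsi]; norm_num
  · intro ψ φ s _
    rw [hmPsiPhiS, hmPhiS, hmPhiPsi, hmPhi]; norm_num
  · intro φ ψ t _
    rw [hmPhiPsiT, hmPsiT, hmPhiPsi, hmPsi]; norm_num
  · rintro ⟨k, μ, f, g, hμ0, hμ1, hf0, hf1, hg0, hg1, heq⟩
    -- winning-probability sum
    have hW : ∀ x : Fin k,
        (f x 0 0 * g x 0 1 + f x 0 1 * g x 0 0) +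
        (f x 0 0 * g x 1 1 + f x 0 1 * g x 1 0) +
        (f x 1 0 * g x 1 1 + f x 1 1 * g x 1 0) +
        (f x 1 0 * g x 0 0 + f x 1 1 * g x 0 1) ≤ 3 := by
      intro x
      have hf00 := hf0 x 0 0; have hf01 := hf0 x 0 1
      have hf10 := hf0 x 1 0; have hf11 := hf0 x 1 1
      have hg00 := hg0 x 0 0; have hg01 := hg0 x 0 1
      have hg10 := hg0 x 1 0; have hg11 := hg0 x 1 1
      have hfs0 := hf1 x 0; have hfs1 := hf1 x 1
      have hgs0 := hg1 x 0; have hgs1 := hg1 x 1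
      rw [Fin.sum_univ_two] at hfs0 hfs1 hgs0 hgs1
      have A0 : (0:ℝ) ≤ 1 - f x 0 0 := by linarith
      have A1 : (0:ℝ) ≤ 1 - f x 1 0 := by linarith
      have B0 : (0:ℝ) ≤ 1 - g x 0 0 := by linarith
      have B1 : (0:ℝ) ≤ 1 - g x 1 0 := by linarith
      nlinarith [mul_nonneg hf00 hg00, mul_nonneg hf00 hg10,
        mul_nonneg hf10 hg00, mul_nonneg hf10 hg10,
        mul_nonneg hf00 B0, mul_nonneg hf00 B1,
        mul_nonneg hf10 B0, mul_nonneg hf10 B1,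
        mul_nonneg A0 hg00, mul_nonneg A0 hg10,
        mul_nonneg A1 hg00, mul_nonneg A1 hg10,
        mul_nonneg A0 B0, mul_nonneg A0 B1,
        mul_nonneg A1 B0, mul_nonneg A1 B1]
    -- the total winning probability
    set E : ℝ := pQuantum 0 1 0 0 + pQuantum 1 0 0 0 +
        pQuantum 0 1 0 1 + pQuantum 1 0 0 1 +
        pQuantum 0 1 1 1 + pQuantum 1 0 1 1 +
        pQuantum 0 0 1 0 + pQuantum 1 1 1 0 with hE
    have hEval : E = Real.cos (π/8) ^ 2 := by
      norm_num [hE, pQuantum, -Real.cos_pi_div_eight, -Real.sin_pi_div_eight]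
      linarith
    have hle : E ≤ 3/4 := by
      have hrw : ∀ s t φ ψ : Fin 2, pQuantum s t φ ψ =
          (1/4) * ∑ x, μ x * f x φ s * g x ψ t := by
        intro s t φ ψ
        rw [heq s t φ ψ, hmPhi, hmPsi]; ring
      rw [hE, hrw, hrw, hrw, hrw, hrw, hrw, hrw, hrw]
      have key : (1:ℝ) / 4 * ∑ x : Fin k, μ x * f x 0 0 * g x 0 1 +
          1 / 4 * ∑ x : Fin k, μ x * f x 0 1 * g x 0 0 +
          1 / 4 * ∑ x : Fin k, μ x * f x 0 0 * g x 1 1 +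
          1 / 4 * ∑ x : Fin k, μ x * f x 0 1 * g x 1 0 +
          1 / 4 * ∑ x : Fin k, μ x * f x 1 0 * g x 1 1 +
          1 / 4 * ∑ x : Fin k, μ x * f x 1 1 * g x 1 0 +
          1 / 4 * ∑ x : Fin k, μ x * f x 1 0 * g x 0 0 +
          1 / 4 * ∑ x : Fin k, μ x * f x 1 1 * g x 0 1
          = 1 / 4 * ∑ x : Fin k, μ x *
            (f x 0 0 * g x 0 1 + f x 0 1 * g x 0 0 + (f x 0 0 * g x 1 1 + f x 0 1 * g x 1 0) +
              (f x 1 0 * g x 1 1 + f x 1 1 * g x 1 0) +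
              (f x 1 0 * g x 0 0 + f x 1 1 * g x 0 1)) := by
        simp only [Finset.mul_sum, ← Finset.sum_add_distrib]
        apply Finset.sum_congr rfl
        intro x _
        ring
      rw [key]
      have hb : ∑ x : Fin k, μ x *
            (f x 0 0 * g x 0 1 + f x 0 1 * g x 0 0 + (f x 0 0 * g x 1 1 + f x 0 1 * g x 1 0) +
              (f x 1 0 * g x 1 1 + f x 1 1 * g x 1 0) +
              (f x 1 0 * g x 0 0 + f x 1 1 * g x 0 1)) ≤ ∑ x : Fin k, μ x * 3 :=
        Finset.sum_le_sum fun x _ => mul_le_mul_of_nonneg_left (hW x) (hμ0 x)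
      have h3 : ∑ x : Fin k, μ x * 3 = 3 := by
        rw [← Finset.sum_mul, hμ1, one_mul]
      linarith
    linarith [hEval ▸ hle, hgt]
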